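/- arXiv:2406.18398 — 8 statements merged into one kernel-verified Lean document; each statement's English description precedes it below -/
import Mathlib

section
/- Let α be a real number. Then the following two conditions hold simultaneously — (i) α > 0, and (ii) for every real t and every complex number w satisfying (3/2 − α·i·t)·w² + (−2 + (2α−2)·i·t)·w + (1/2 + (1−α)·i·t) = 0 one has |w| ≤ 1 — if and only if α ≥ 3/4. (This is the statement that the generalized BDF2 method is A-stable if and only if α ≥ 3/4.) -/
/-!
Schur–Cohn argument. If `a w² + b w + c = a (w - w₁)(w - w₂)`, then
`conj a * b - conj b * c = -‖a‖² ((1 - ‖w₂‖²) w₁ + (1 - ‖w₁‖²) w₂)` and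
`‖a‖² - ‖c‖² = ‖a‖² (1 - ‖w₁‖² ‖w₂‖²)`, so comparing `‖conj a * b - conj b * c‖` with
`‖a‖² - ‖c‖²` detects whether the roots lie in the closed unit disc. For the generalized BDF2
polynomial at `z = it` the square of the gap `‖a‖² - ‖c‖²` exceeds `‖conj a * b - conj b * c‖²`
by exactly `(4α - 3) t⁴`.
-/

open Complex ComplexConjugate

section SchurCohn

variable {E : Type*} [SeminormedAddCommGroup E] [NormedSpace ℝ E]

theorem norm_smul_one_sub_sq_add_le {u v : E} (hu : ‖u‖ ≤ 1) (hv : ‖v‖ ≤ 1) :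
    ‖(1 - ‖v‖ ^ 2) • u + (1 - ‖u‖ ^ 2) • v‖ ≤ 1 - ‖u‖ ^ 2 * ‖v‖ ^ 2 := by
  have hu0 := norm_nonneg u
  have hv0 := norm_nonneg v
  calc _ ≤ (1 - ‖v‖ ^ 2) * ‖u‖ + (1 - ‖u‖ ^ 2) * ‖v‖ := by
        refine (norm_add_le _ _).trans (add_le_add ?_ ?_) <;>
          rw [norm_smul, Real.norm_of_nonneg (by nlinarith)]
    _ ≤ _ := by
        nlinarith [mul_nonneg (mul_nonneg (sub_nonneg.2 hu) (sub_nonneg.2 hv))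
          (sub_nonneg.2 (mul_le_one₀ hu hv0 hv))]

theorem lt_norm_smul_one_sub_sq_add {u v : E} (hu : 1 < ‖u‖) (huv : ‖u‖ * ‖v‖ < 1) :
    1 - ‖u‖ ^ 2 * ‖v‖ ^ 2 < ‖(1 - ‖v‖ ^ 2) • u + (1 - ‖u‖ ^ 2) • v‖ := by
  have hv0 := norm_nonneg v
  have hv : ‖v‖ < 1 := by nlinarith
  calc _ < (1 - ‖v‖ ^ 2) * ‖u‖ - (‖u‖ ^ 2 - 1) * ‖v‖ := by
        nlinarith [mul_pos (mul_pos (sub_pos.2 hu) (sub_pos.2 hv)) (sub_pos.2 huv)]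
    _ = ‖(1 - ‖v‖ ^ 2) • u‖ - ‖-((1 - ‖u‖ ^ 2) • v)‖ := by
        rw [norm_neg, norm_smul, norm_smul, Real.norm_of_nonneg (by nlinarith),
          Real.norm_of_nonpos (by nlinarith)]
        ring
    _ ≤ _ := by simpa using norm_sub_norm_le ((1 - ‖v‖ ^ 2) • u) (-((1 - ‖u‖ ^ 2) • v))

theorem exists_vieta_of_ne_zero {K : Type*} [Field K] [IsAlgClosed K] {a : K} (ha : a ≠ 0)
    (b c : K) : ∃ w₁ w₂ : K, b = -a * (w₁ + w₂) ∧ c = a * (w₁ * w₂) := by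
  open Polynomial in
  obtain ⟨w₁, hw₁⟩ := IsAlgClosed.exists_root (C a * X ^ 2 + C b * X + C c)
    (by rw [degree_quadratic ha]; decide)
  simp only [IsRoot, eval_add, eval_mul, eval_C, eval_pow, eval_X] at hw₁
  have hba : a * (b / a) = b := mul_div_cancel₀ b ha
  exact ⟨w₁, -b / a - w₁, by linear_combination -hba, by linear_combination hw₁ + w₁ * hba⟩

theorem conj_mul_sub_conj_mul_of_vieta (a w₁ w₂ : ℂ) :
    conj a * (-a * (w₁ + w₂)) - conj (-a * (w₁ + w₂)) * (a * (w₁ * w₂)) =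
      -(‖a‖ ^ 2 • ((1 - ‖w₂‖ ^ 2) • w₁ + (1 - ‖w₁‖ ^ 2) • w₂)) := by
  simp only [real_smul, map_neg, map_mul, map_add]
  push_cast
  rw [← mul_conj', ← mul_conj', ← mul_conj']
  ring

variable {a b c : ℂ}

theorem norm_conj_mul_sub_conj_mul_of_vieta {w₁ w₂ : ℂ} (hb : b = -a * (w₁ + w₂))
    (hc : c = a * (w₁ * w₂)) :
    ‖conj a * b - conj b * c‖ = ‖a‖ ^ 2 * ‖(1 - ‖w₂‖ ^ 2) • w₁ + (1 - ‖w₁‖ ^ 2) • w₂‖ := by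
  rw [hb, hc, conj_mul_sub_conj_mul_of_vieta, norm_neg, norm_smul,
    Real.norm_of_nonneg (by positivity)]

theorem norm_conj_mul_sub_conj_mul_le_of_vieta {w₁ w₂ : ℂ} (hb : b = -a * (w₁ + w₂))
    (hc : c = a * (w₁ * w₂)) (h₁ : ‖w₁‖ ≤ 1) (h₂ : ‖w₂‖ ≤ 1) :
    ‖conj a * b - conj b * c‖ ≤ ‖a‖ ^ 2 - ‖c‖ ^ 2 := by
  rw [norm_conj_mul_sub_conj_mul_of_vieta hb hc, hc, norm_mul, norm_mul]
  nlinarith [mul_le_mul_of_nonneg_left (norm_smul_one_sub_sq_add_le h₁ h₂) (sq_nonneg ‖a‖)]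

theorem norm_le_one_of_norm_conj_mul_sub_conj_mul_le {w : ℂ} (hca : ‖c‖ < ‖a‖)
    (h : ‖conj a * b - conj b * c‖ ≤ ‖a‖ ^ 2 - ‖c‖ ^ 2) (hw : a * w ^ 2 + b * w + c = 0) :
    ‖w‖ ≤ 1 := by
  by_contra! hw₁
  have ha : a ≠ 0 := norm_pos_iff.1 ((norm_nonneg c).trans_lt hca)
  have hw₀ : w ≠ 0 := norm_pos_iff.1 (one_pos.trans hw₁)
  -- the second root is `c / (a w)` by Vieta's product formula
  set w' := c / (a * w)
  have hc : c = a * (w * w') := by simp only [w']; field_simp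
  have hb : b = -a * (w + w') := mul_right_cancel₀ hw₀ (by linear_combination hw - hc)
  have hww' : ‖w‖ * ‖w'‖ < 1 := by
    rw [hc, norm_mul, norm_mul] at hca
    nlinarith [norm_pos_iff.2 ha]
  have key := mul_lt_mul_of_pos_left (lt_norm_smul_one_sub_sq_add hw₁ hww')
    (pow_pos (norm_pos_iff.2 ha) 2)
  rw [norm_conj_mul_sub_conj_mul_of_vieta hb hc, hc, norm_mul, norm_mul] at h
  nlinarith

end SchurCohn

noncomputable section BDF2

variable (α t : ℝ)

def bdf2Lead : ℂ := 3/2 - (α : ℂ) * I * (t : ℂ)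

def bdf2Mid : ℂ := -2 + (2 * (α : ℂ) - 2) * I * (t : ℂ)

def bdf2Const : ℂ := 1/2 + (1 - (α : ℂ)) * I * (t : ℂ)

theorem bdf2Lead_ne_zero : bdf2Lead α t ≠ 0 := fun h => by
  simpa [bdf2Lead] using congrArg re h

theorem norm_sq_bdf2Lead_sub_norm_sq_bdf2Const :
    ‖bdf2Lead α t‖ ^ 2 - ‖bdf2Const α t‖ ^ 2 = 2 + (2 * α - 1) * t ^ 2 := by
  have hlead : bdf2Lead α t = ((3/2 : ℝ) : ℂ) + ((-(α * t) : ℝ) : ℂ) * I := by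
    simp only [bdf2Lead]; push_cast; ring
  have hconst : bdf2Const α t = ((1/2 : ℝ) : ℂ) + (((1 - α) * t : ℝ) : ℂ) * I := by
    simp only [bdf2Const]; push_cast; ring
  rw [hlead, hconst, Complex.sq_norm, Complex.sq_norm, normSq_add_mul_I, normSq_add_mul_I]
  ring

theorem bdf2_schur_eq :
    conj (bdf2Lead α t) * bdf2Mid α t - conj (bdf2Mid α t) * bdf2Const α t =
      ((-2 + (2 - 2 * α) * t ^ 2 : ℝ) : ℂ) + ((-2 * t : ℝ) : ℂ) * I := by
  simp only [bdf2Lead, bdf2Mid, bdf2Const, map_add, map_sub, map_mul, map_neg, map_div₀,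
    map_ofNat, conj_I, conj_ofReal]
  push_cast
  linear_combination ((2 * (α : ℂ) - 2) * (t : ℂ) ^ 2) * I_sq

theorem sq_gap_sub_norm_sq_bdf2_schur :
    (‖bdf2Lead α t‖ ^ 2 - ‖bdf2Const α t‖ ^ 2) ^ 2 -
      ‖conj (bdf2Lead α t) * bdf2Mid α t - conj (bdf2Mid α t) * bdf2Const α t‖ ^ 2 =
      (4 * α - 3) * t ^ 4 := by
  rw [norm_sq_bdf2Lead_sub_norm_sq_bdf2Const, bdf2_schur_eq, Complex.sq_norm, normSq_add_mul_I]
  ring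

theorem bdf2_roots_norm_le_one_iff :
    (∀ t : ℝ, ∀ w : ℂ, bdf2Lead α t * w ^ 2 + bdf2Mid α t * w + bdf2Const α t = 0 → ‖w‖ ≤ 1)
      ↔ 3/4 ≤ α := by
  have hgap := norm_sq_bdf2Lead_sub_norm_sq_bdf2Const α
  have hschur := sq_gap_sub_norm_sq_bdf2_schur α
  constructor
  · -- the single frequency `t = 1` already forces `4α - 3 ≥ 0`
    intro H
    obtain ⟨w₁, w₂, hb, hc⟩ := exists_vieta_of_ne_zero (bdf2Lead_ne_zero α 1) (bdf2Mid α 1)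
      (bdf2Const α 1)
    have h₁ := H 1 w₁ (by rw [hb, hc]; ring)
    have h₂ := H 1 w₂ (by rw [hb, hc]; ring)
    have hle := norm_conj_mul_sub_conj_mul_le_of_vieta hb hc h₁ h₂
    nlinarith [hgap 1, hschur 1, norm_nonneg
      (conj (bdf2Lead α 1) * bdf2Mid α 1 - conj (bdf2Mid α 1) * bdf2Const α 1)]
  · intro hα t w hw
    have hgap_pos : 0 < ‖bdf2Lead α t‖ ^ 2 - ‖bdf2Const α t‖ ^ 2 := by
      rw [hgap]; nlinarith [sq_nonneg t]
    refine norm_le_one_of_norm_conj_mul_sub_conj_mul_le ?_ ?_ hw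
    · exact (pow_lt_pow_iff_left₀ (norm_nonneg _) (norm_nonneg _) two_ne_zero).1 (by linarith)
    · refine le_of_pow_le_pow_left₀ two_ne_zero hgap_pos.le ?_
      nlinarith [hschur t, pow_nonneg (sq_nonneg t) 2]

end BDF2

/-- A-stability of the generalized BDF2 method: the leading coefficient α is positive and
all roots of the characteristic polynomial η(it, w) lie in the closed unit disc for all
real t, if and only if α ≥ 3/4. -/
theorem generalized_BDF2_A_stable_iff (α : ℝ) :
    (0 < α ∧
      ∀ t : ℝ, ∀ w : ℂ,
        (3/2 - (α : ℂ) * Complex.I * (t : ℂ)) * w ^ 2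
          + (-2 + (2 * (α : ℂ) - 2) * Complex.I * (t : ℂ)) * w
          + (1/2 + (1 - (α : ℂ)) * Complex.I * (t : ℂ)) = 0 →
        ‖w‖ ≤ 1)
    ↔ α ≥ 3/4 :=
  ⟨fun h => (bdf2_roots_norm_le_one_iff α).1 h.2,
    fun h => ⟨by linarith, (bdf2_roots_norm_le_one_iff α).2 h⟩⟩
end

section
/- Let α be a real number and for each real t set a(t) = 3/2 − α·i·t, b(t) = −2 + (2α−2)·i·t, c(t) = 1/2 + (1−α)·i·t as complex numbers. Then the two Cohn–Schur conditions hold for all real t — namely |a(t)| ≥ |c(t)| and ||a(t)|² − |c(t)|²| ≥ |a(t)·conj(b(t)) − b(t)·conj(c(t))| — if and only if α ≥ 3/4. -/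
/-!
On the imaginary axis, with `s = t²`, one computes `|a|² − |c|² = 2 + (2α − 1)s` and
`|a·conj b − b·conj c|² = (2 + (2α − 2)s)² + 4s`, whose difference of squares collapses to
`(|a|² − |c|²)² − |a·conj b − b·conj c|² = (4α − 3)s²`. So the second Cohn–Schur condition holds
for all `t` exactly when `α ≥ 3/4`, and then the first one, `2 + (2α − 1)s ≥ 0`, holds as well.
-/

open Complex ComplexConjugate

noncomputable section

namespace GeneralizedBDF2

def a (α t : ℝ) : ℂ := 3/2 - (α : ℂ) * I * (t : ℂ)

def b (α t : ℝ) : ℂ := -2 + (2 * (α : ℂ) - 2) * I * (t : ℂ)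

def c (α t : ℝ) : ℂ := 1/2 + (1 - (α : ℂ)) * I * (t : ℂ)

def schurCross (α t : ℝ) : ℂ := a α t * conj (b α t) - b α t * conj (c α t)

variable (α t : ℝ)

theorem normSq_a_sub_normSq_c : normSq (a α t) - normSq (c α t) = 2 + (2 * α - 1) * t ^ 2 := by
  simp [a, c, normSq_apply]
  ring

theorem normSq_schurCross : normSq (schurCross α t) = (2 + (2 * α - 2) * t ^ 2) ^ 2 + 4 * t ^ 2 := by
  simp [schurCross, a, b, c, normSq_apply]
  ring

theorem sq_normSq_sub_sub_normSq_schurCross :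
    (normSq (a α t) - normSq (c α t)) ^ 2 - normSq (schurCross α t) = (4 * α - 3) * t ^ 4 := by
  rw [normSq_a_sub_normSq_c, normSq_schurCross]
  ring

theorem norm_c_le_norm_a_iff : ‖c α t‖ ≤ ‖a α t‖ ↔ 0 ≤ 2 + (2 * α - 1) * t ^ 2 := by
  rw [← sq_le_sq₀ (norm_nonneg _) (norm_nonneg _), Complex.sq_norm, Complex.sq_norm, ← sub_nonneg,
    normSq_a_sub_normSq_c]

theorem norm_schurCross_le_iff :
    ‖schurCross α t‖ ≤ |‖a α t‖ ^ 2 - ‖c α t‖ ^ 2| ↔ 0 ≤ (4 * α - 3) * t ^ 4 := by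
  rw [← sq_le_sq₀ (norm_nonneg _) (abs_nonneg _), sq_abs, Complex.sq_norm, Complex.sq_norm,
    Complex.sq_norm, ← sub_nonneg, sq_normSq_sub_sub_normSq_schurCross]

end GeneralizedBDF2

end

/-- Cohn–Schur conditions for the generalized BDF2 scheme: with
a(t) = 3/2 − α·i·t, b(t) = −2 + (2α−2)·i·t, c(t) = 1/2 + (1−α)·i·t,
the conditions |a| ≥ |c| and ||a|² − |c|²| ≥ |a·conj(b) − b·conj(c)| hold for all real t
if and only if α ≥ 3/4. -/
theorem generalized_BDF2_CohnSchur_iff (α : ℝ) :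
    (∀ t : ℝ,
      ‖3/2 - (α : ℂ) * Complex.I * (t : ℂ)‖
          ≥ ‖1/2 + (1 - (α : ℂ)) * Complex.I * (t : ℂ)‖ ∧
      |‖3/2 - (α : ℂ) * Complex.I * (t : ℂ)‖ ^ 2
          - ‖1/2 + (1 - (α : ℂ)) * Complex.I * (t : ℂ)‖ ^ 2|
        ≥ ‖
            (3/2 - (α : ℂ) * Complex.I * (t : ℂ))
                * (starRingEnd ℂ) (-2 + (2 * (α : ℂ) - 2) * Complex.I * (t : ℂ))
              - (-2 + (2 * (α : ℂ) - 2) * Complex.I * (t : ℂ))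
                * (starRingEnd ℂ) (1/2 + (1 - (α : ℂ)) * Complex.I * (t : ℂ))‖)
    ↔ α ≥ 3/4 := by
  open GeneralizedBDF2 in
  change (∀ t, ‖c α t‖ ≤ ‖a α t‖ ∧ ‖schurCross α t‖ ≤ |‖a α t‖ ^ 2 - ‖c α t‖ ^ 2|) ↔ 3/4 ≤ α
  simp only [GeneralizedBDF2.norm_c_le_norm_a_iff, GeneralizedBDF2.norm_schurCross_le_iff]
  constructor
  · intro h
    have h_at_one := (h 1).2
    norm_num at h_at_one
    linarith
  · intro hα t
    exact ⟨by nlinarith [sq_nonneg t], mul_nonneg (by linarith) (by positivity)⟩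
end

section
/- Let α be a real number. Then the following two conditions hold simultaneously — (i) α > 0, and (ii) for every real t and every complex number w satisfying (1 − α·i·t)·w² + (−1 + (2α−3/2)·i·t)·w + (1/2 − α)·i·t = 0 one has |w| ≤ 1 — if and only if α ≥ 1/2. (This is the statement that the generalized AM2 method is A-stable if and only if α ≥ 1/2.) -/
/-!
Write η(it, w) = ρ(w) - i t σ(w) with ρ(w) = w² - w and σ(w) = α w² + (3/2 - 2α) w + (α - 1/2).
At a root, ρ(w) = i t σ(w), so Re(ρ(w) · conj σ(w)) = 0. This real part equals
|w|²(|w|² - 1)/2 + (α - 1/2)(|w|² - Re w)|w - 1|², which is positive for |w| > 1 once α ≥ 1/2.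
For 0 < α < 1/2 the same expression vanishes at w = i y with y² = (1 - α)/α > 1, and this w is
a root for t = y/(3/2 - 2α).
-/

open Complex ComplexConjugate

noncomputable def am2CharPoly (α t : ℝ) (w : ℂ) : ℂ :=
  (1 - (α : ℂ) * I * (t : ℂ)) * w ^ 2
    + (-1 + (2 * (α : ℂ) - 3/2) * I * (t : ℂ)) * w
    + (1/2 - (α : ℂ)) * I * (t : ℂ)

noncomputable def am2Sigma (α : ℝ) (w : ℂ) : ℂ :=
  α * w ^ 2 + (3/2 - 2 * α) * w + (α - 1/2)

theorem am2CharPoly_eq_sub_I_mul_am2Sigma (α t : ℝ) (w : ℂ) :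
    am2CharPoly α t w = w ^ 2 - w - I * t * am2Sigma α w := by
  unfold am2CharPoly am2Sigma
  ring

theorem re_mul_conj_eq_zero_of_eq_I_mul {z u : ℂ} {t : ℝ} (h : z = I * t * u) :
    (z * conj u).re = 0 := by
  rw [h, mul_assoc, mul_assoc, mul_conj]
  simp

theorem re_mul_conj_am2Sigma (α : ℝ) (w : ℂ) :
    ((w ^ 2 - w) * conj (am2Sigma α w)).re
      = ‖w‖ ^ 2 * (‖w‖ ^ 2 - 1) / 2 + (α - 1/2) * (‖w‖ ^ 2 - w.re) * ‖w - 1‖ ^ 2 := by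
  simp only [Complex.sq_norm, normSq_apply, am2Sigma]
  simp only [pow_two, one_div, map_add, map_mul, conj_ofReal, map_sub, map_div₀, map_ofNat,
    map_inv₀, mul_re, sub_re, add_re, ofReal_re, conj_re, conj_im, mul_neg, neg_mul, neg_neg,
    ofReal_im, mul_im, zero_mul, sub_zero, div_ofNat_re, re_ofNat, im_ofNat, mul_zero, sub_im,
    div_ofNat_im, zero_div, add_zero, sub_self, neg_zero, inv_re, normSq_ofNat,
    div_self_mul_self', add_im, inv_im, one_re, one_im]
  ring

theorem norm_le_one_of_am2CharPoly_eq_zero {α t : ℝ} {w : ℂ} (hα : 1/2 ≤ α)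
    (hw : am2CharPoly α t w = 0) : ‖w‖ ≤ 1 := by
  by_contra! hw1
  have hρσ : w ^ 2 - w = I * t * am2Sigma α w :=
    sub_eq_zero.mp ((am2CharPoly_eq_sub_I_mul_am2Sigma α t w).symm.trans hw)
  have hzero := re_mul_conj_eq_zero_of_eq_I_mul hρσ
  rw [re_mul_conj_am2Sigma] at hzero
  have hre : 0 < ‖w‖ ^ 2 - w.re := by nlinarith [re_le_norm w]
  nlinarith [mul_nonneg (mul_nonneg (sub_nonneg.2 hα) hre.le) (sq_nonneg ‖w - 1‖),
    mul_pos (pow_pos (zero_lt_one.trans hw1) 2) (sub_pos.2 (one_lt_pow₀ hw1 two_ne_zero))]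

theorem am2CharPoly_I_mul_eq_zero {α t y : ℝ} (hy : α * y ^ 2 = 1 - α)
    (ht : t * (3/2 - 2 * α) = y) : am2CharPoly α t (I * y) = 0 := by
  have hyC : (α : ℂ) * y ^ 2 = 1 - α := by exact_mod_cast hy
  have htC : (t : ℂ) * (3/2 - 2 * α) = y := by rw [← ht]; push_cast; ring
  unfold am2CharPoly
  linear_combination (y + I) * htC + I * t * hyC
    + (y ^ 2 - α * I * t * y ^ 2 - (3/2 - 2 * α) * t * y) * I_sq

/-- A-stability of the generalized AM2 method: the leading coefficient α is positive and
all roots of the characteristic polynomial η(it, w) lie in the closed unit disc for all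
real t, if and only if α ≥ 1/2. -/
theorem generalized_AM2_A_stable_iff (α : ℝ) :
    (0 < α ∧
      ∀ t : ℝ, ∀ w : ℂ,
        (1 - (α : ℂ) * Complex.I * (t : ℂ)) * w ^ 2
          + (-1 + (2 * (α : ℂ) - 3/2) * Complex.I * (t : ℂ)) * w
          + (1/2 - (α : ℂ)) * Complex.I * (t : ℂ) = 0 →
        ‖w‖ ≤ 1)
    ↔ α ≥ 1/2 := by
  constructor
  · rintro ⟨hα, hroots⟩
    by_contra! hlt
    set y := √((1 - α) / α)
    have hy : α * y ^ 2 = 1 - α := by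
      rw [Real.sq_sqrt (div_nonneg (by linarith) hα.le)]
      field_simp
    have hy1 : 1 < y := by
      rw [Real.lt_sqrt zero_le_one, one_pow, lt_div_iff₀ hα]
      linarith
    have hroot := am2CharPoly_I_mul_eq_zero (t := y / (3/2 - 2 * α)) hy
      (div_mul_cancel₀ y (by linarith))
    have hnorm := hroots _ _ hroot
    rw [norm_mul, norm_I, one_mul, norm_real, Real.norm_of_nonneg (by linarith)] at hnorm
    linarith
  · intro hα
    exact ⟨by linarith, fun t w hw => norm_le_one_of_am2CharPoly_eq_zero hα hw⟩
end

section
/- Let α be a real number and for each real t set a(t) = 1 − α·i·t, b(t) = −1 + (2α−3/2)·i·t, c(t) = (1/2 − α)·i·t as complex numbers. Then the two Cohn–Schur conditions hold for all real t — namely |a(t)| ≥ |c(t)| and ||a(t)|² − |c(t)|²| ≥ |a(t)·conj(b(t)) − b(t)·conj(c(t))| — if and only if α ≥ 1/2. -/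
/-!
On the imaginary axis everything reduces to polynomials in `t²`:
`|a|² - |c|² = 1 + (α - 1/4) t²` and `|a·conj b - b·conj c|² = (1 + (α - 3/4) t²)² + t²`,
and the gap between the squares of the two sides of the second Cohn–Schur condition collapses to
`(α - 1/2) t⁴`. So the second condition holds for all `t` exactly when `α ≥ 1/2`, and then the
first one holds as well.
-/

namespace GeneralizedAM2

open ComplexConjugate

/-- The coefficients of `η(it, w) = a w² + b w + c`. -/
noncomputable def a (α t : ℝ) : ℂ := 1 - (α : ℂ) * Complex.I * (t : ℂ)

noncomputable def b (α t : ℝ) : ℂ := -1 + (2 * (α : ℂ) - 3/2) * Complex.I * (t : ℂ)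

noncomputable def c (α t : ℝ) : ℂ := (1/2 - (α : ℂ)) * Complex.I * (t : ℂ)

variable (α t : ℝ)

@[simp] theorem a_re : (a α t).re = 1 := by simp [a]
@[simp] theorem a_im : (a α t).im = -(α * t) := by simp [a]
@[simp] theorem b_re : (b α t).re = -1 := by simp [b]
@[simp] theorem b_im : (b α t).im = (2 * α - 3/2) * t := by simp [b]
@[simp] theorem c_re : (c α t).re = 0 := by simp [c]
@[simp] theorem c_im : (c α t).im = (1/2 - α) * t := by simp [c]

theorem sq_norm_a_sub_sq_norm_c : ‖a α t‖ ^ 2 - ‖c α t‖ ^ 2 = 1 + (α - 1/4) * t ^ 2 := by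
  simp only [Complex.sq_norm, Complex.normSq_apply, a_re, a_im, c_re, c_im]
  ring

theorem sq_norm_a_mul_conj_b_sub_b_mul_conj_c :
    ‖a α t * conj (b α t) - b α t * conj (c α t)‖ ^ 2 = (1 + (α - 3/4) * t ^ 2) ^ 2 + t ^ 2 := by
  simp only [Complex.sq_norm, Complex.normSq_apply, Complex.sub_re, Complex.sub_im,
    Complex.mul_re, Complex.mul_im, Complex.conj_re, Complex.conj_im,
    a_re, a_im, b_re, b_im, c_re, c_im]
  ring

theorem cohnSchur_gap :
    (‖a α t‖ ^ 2 - ‖c α t‖ ^ 2) ^ 2 - ‖a α t * conj (b α t) - b α t * conj (c α t)‖ ^ 2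
      = (α - 1/2) * t ^ 4 := by
  rw [sq_norm_a_sub_sq_norm_c, sq_norm_a_mul_conj_b_sub_b_mul_conj_c]
  ring

end GeneralizedAM2

theorem norm_le_abs_iff_sq_le {E : Type*} [SeminormedAddGroup E] (z : E) (p : ℝ) :
    ‖z‖ ≤ |p| ↔ ‖z‖ ^ 2 ≤ p ^ 2 := by
  rw [sq_le_sq, abs_norm]

open GeneralizedAM2 ComplexConjugate in
/-- Cohn–Schur conditions for the generalized AM2 scheme: with
a(t) = 1 − α·i·t, b(t) = −1 + (2α−3/2)·i·t, c(t) = (1/2 − α)·i·t,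
the conditions |a| ≥ |c| and ||a|² − |c|²| ≥ |a·conj(b) − b·conj(c)| hold for all real t
if and only if α ≥ 1/2. -/
theorem generalized_AM2_CohnSchur_iff (α : ℝ) :
    (∀ t : ℝ,
      ‖1 - (α : ℂ) * Complex.I * (t : ℂ)‖
          ≥ ‖(1/2 - (α : ℂ)) * Complex.I * (t : ℂ)‖ ∧
      |‖1 - (α : ℂ) * Complex.I * (t : ℂ)‖ ^ 2
          - ‖(1/2 - (α : ℂ)) * Complex.I * (t : ℂ)‖ ^ 2|
        ≥ ‖
            ((1 - (α : ℂ) * Complex.I * (t : ℂ))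
                * (starRingEnd ℂ) (-1 + (2 * (α : ℂ) - 3/2) * Complex.I * (t : ℂ))
              - (-1 + (2 * (α : ℂ) - 3/2) * Complex.I * (t : ℂ))
                * (starRingEnd ℂ) ((1/2 - (α : ℂ)) * Complex.I * (t : ℂ)))‖)
    ↔ α ≥ 1/2 := by
  change (∀ t : ℝ, ‖c α t‖ ≤ ‖a α t‖ ∧
      ‖a α t * conj (b α t) - b α t * conj (c α t)‖ ≤ |‖a α t‖ ^ 2 - ‖c α t‖ ^ 2|) ↔ 1/2 ≤ α
  simp only [norm_le_abs_iff_sq_le]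
  constructor
  · intro h
    linarith [(h 1).2, cohnSchur_gap α 1]
  · intro hα t
    refine ⟨?_, ?_⟩
    · rw [← sq_le_sq₀ (norm_nonneg _) (norm_nonneg _)]
      nlinarith [sq_norm_a_sub_sq_norm_c α t, sq_nonneg t]
    · nlinarith [cohnSchur_gap α t, mul_nonneg (sub_nonneg.2 hα) (pow_nonneg (sq_nonneg t) 2)]
end

section
/- Let a₀, a₁, b₀, b₁, b₂ be real numbers with b₂ > 0, let z be a complex number with Re(z) ≤ 0, let h > 0, and suppose that both complex roots of the quadratic p(w) = (1 − b₂·z)·w² + (a₁ − b₁·z)·w + (a₀ − b₀·z) have modulus strictly less than 1. Let M ≥ 0 and let g : ℕ → ℂ satisfy |g_n| ≤ M for all n. Then there exists a constant C ≥ 0, depending only on a₀, a₁, b₀, b₁, b₂, z, h, M but not on the initial values, such that every sequence y : ℕ → ℂ satisfying (1 − b₂·z)·y_{n+2} + (a₁ − b₁·z)·y_{n+1} + (a₀ − b₀·z)·y_n = h·(b₂·g_{n+2} + b₁·g_{n+1} + b₀·g_n) for all n is bounded (sup_n |y_n| < ∞) and satisfies limsup_{n→∞} |y_n| ≤ C.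 (Sufficiency direction of the equivalence between A-stability and uniform-in-time stability.) -/
/-!
Since `Re z ≤ 0` and `b₂ > 0`, the leading coefficient `1 - b₂ z` does not vanish, so the
characteristic polynomial factors as `(1 - b₂ z)(w - r₁)(w - r₂)` with `‖r₁‖, ‖r₂‖ < 1`.
The scheme then splits into two first-order recurrences: `u n := y (n + 1) - r₂ y n` satisfies
`u (n + 1) = r₁ u n + f n` with a bounded forcing `f`, and `y (n + 1) = r₂ y n + u n`. A
first-order recurrence with contraction factor `‖r‖ < 1` keeps the solution bounded and has
`limsup ‖x‖ ≤ limsup ‖e‖ / (1 - ‖r‖)`, because the limsup `L` of the norms satisfies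
`L ≤ ‖r‖ L + limsup ‖e‖`. Applied to `u` and then to `y`, this bounds `limsup ‖y‖` by
`sup ‖f‖ / ((1 - ‖r₁‖)(1 - ‖r₂‖))`, whatever the initial values.
-/

open Filter Set

section RealRecurrence

variable {a e : ℕ → ℝ} {τ : ℝ}

theorem le_max_div_of_succ_le_mul_add {B : ℝ} (hτ0 : 0 ≤ τ) (hτ1 : τ < 1)
    (hrec : ∀ n, a (n + 1) ≤ τ * a n + e n) (he : ∀ n, e n ≤ B) (n : ℕ) :
    a n ≤ max (a 0) (B / (1 - τ)) := by
  induction n with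
  | zero => exact le_max_left _ _
  | succ n ih =>
    have hB : B ≤ (1 - τ) * max (a 0) (B / (1 - τ)) := by
      rw [← div_le_iff₀' (by linarith)]
      exact le_max_right _ _
    calc a (n + 1) ≤ τ * a n + e n := hrec n
      _ ≤ τ * max (a 0) (B / (1 - τ)) + B := by gcongr; exact he n
      _ ≤ max (a 0) (B / (1 - τ)) := by linarith

theorem limsup_le_div_of_succ_le_mul_add {E : ℝ} (hτ0 : 0 ≤ τ) (hτ1 : τ < 1)
    (ha : ∀ n, 0 ≤ a n) (hrec : ∀ n, a (n + 1) ≤ τ * a n + e n)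
    (he : ∀ n, 0 ≤ e n) (he_bdd : BddAbove (range e)) (hE : limsup e atTop ≤ E) :
    limsup a atTop ≤ E / (1 - τ) := by
  obtain ⟨B, hB⟩ := he_bdd
  have hBe (n : ℕ) : e n ≤ B := hB ⟨n, rfl⟩
  have hKa := le_max_div_of_succ_le_mul_add hτ0 hτ1 hrec hBe
  have ha_bdd : IsBoundedUnder (· ≤ ·) atTop a := isBoundedUnder_of ⟨_, hKa⟩
  have hτa_bdd : IsBoundedUnder (· ≤ ·) atTop (fun n => τ * a n) :=
    isBoundedUnder_of ⟨_, fun n => mul_le_mul_of_nonneg_left (hKa n) hτ0⟩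
  have hτa : limsup (fun n => τ * a n) atTop = τ * limsup a atTop :=
    ((monotone_mul_left_of_nonneg hτ0).map_limsup_of_continuousAt a
      (continuous_const_mul τ).continuousAt ha_bdd (isCoboundedUnder_le_of_le atTop ha)).symm
  have key : limsup a atTop ≤ τ * limsup a atTop + E :=
    calc limsup a atTop = limsup (fun n => a (n + 1)) atTop := (limsup_nat_add a 1).symm
      _ ≤ limsup (fun n => τ * a n + e n) atTop :=
          limsup_le_limsup (Eventually.of_forall hrec)
            (isCoboundedUnder_le_of_le atTop fun n => ha (n + 1))
            (isBoundedUnder_le_add hτa_bdd (isBoundedUnder_of ⟨B, hBe⟩))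
      _ ≤ limsup (fun n => τ * a n) atTop + limsup e atTop :=
          limsup_add_le (isBoundedUnder_of ⟨0, fun n => mul_nonneg hτ0 (ha n)⟩) hτa_bdd
            (isCoboundedUnder_le_of_le atTop he) (isBoundedUnder_of ⟨B, hBe⟩)
      _ ≤ τ * limsup a atTop + E := by rw [hτa]; gcongr
  rw [le_div_iff₀ (by linarith)]
  linarith

end RealRecurrence

theorem bddAbove_norm_and_limsup_norm_le_of_succ_eq_mul_add {R : Type*} [SeminormedRing R]
    {x e : ℕ → R} {r : R} {E : ℝ} (hr : ‖r‖ < 1) (hrec : ∀ n, x (n + 1) = r * x n + e n)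
    (he_bdd : BddAbove (range fun n => ‖e n‖)) (hE : limsup (fun n => ‖e n‖) atTop ≤ E) :
    BddAbove (range fun n => ‖x n‖) ∧ limsup (fun n => ‖x n‖) atTop ≤ E / (1 - ‖r‖) := by
  have hnorm (n : ℕ) : ‖x (n + 1)‖ ≤ ‖r‖ * ‖x n‖ + ‖e n‖ := by
    rw [hrec]
    exact (norm_add_le _ _).trans (add_le_add_left (norm_mul_le _ _) _)
  obtain ⟨B, hB⟩ := id he_bdd
  refine ⟨⟨_, forall_mem_range.2 <| le_max_div_of_succ_le_mul_add (norm_nonneg r) hr hnorm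
    (forall_mem_range.1 hB)⟩, ?_⟩
  exact limsup_le_div_of_succ_le_mul_add (norm_nonneg r) hr (fun n => norm_nonneg _) hnorm
    (fun n => norm_nonneg _) he_bdd hE

theorem exists_quadratic_vieta {K : Type*} [Field K] [IsAlgClosed K] [NeZero (2 : K)]
    {a b c : K} (ha : a ≠ 0) : ∃ r₁ r₂ : K, b = -(a * (r₁ + r₂)) ∧ c = a * (r₁ * r₂) := by
  obtain ⟨r, hr⟩ :=
    exists_quadratic_eq_zero (b := b) (c := c) ha (IsAlgClosed.exists_eq_mul_self _)
  have hba : a * (b / a) = b := mul_div_cancel₀ b ha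
  exact ⟨r, -b / a - r, by linear_combination -hba, by linear_combination hr + r * hba⟩

theorem sub_mul_succ_eq_of_quadratic_recurrence {K : Type*} [Field K] {A B C r₁ r₂ : K}
    (hA : A ≠ 0) (hB : B = -(A * (r₁ + r₂))) (hC : C = A * (r₁ * r₂)) {y f : ℕ → K}
    (hy : ∀ n, A * y (n + 2) + B * y (n + 1) + C * y n = f n) (n : ℕ) :
    y (n + 2) - r₂ * y (n + 1) = r₁ * (y (n + 1) - r₂ * y n) + f n / A := by
  rw [← hy n, hB, hC]
  field_simp
  ring

theorem Complex.one_sub_ofReal_mul_ne_zero {b : ℝ} (hb : 0 < b) {z : ℂ} (hz : z.re ≤ 0) :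
    1 - (b : ℂ) * z ≠ 0 := by
  intro h
  have := congrArg Complex.re h
  simp only [Complex.sub_re, Complex.one_re, Complex.re_ofReal_mul, Complex.zero_re] at this
  nlinarith [mul_nonpos_of_nonneg_of_nonpos hb.le hz]

theorem Complex.norm_ofReal_mul_add_le {g : ℕ → ℂ} {M : ℝ} (hg : ∀ n, ‖g n‖ ≤ M)
    (c₀ c₁ c₂ : ℝ) (n : ℕ) :
    ‖(c₂ : ℂ) * g (n + 2) + (c₁ : ℂ) * g (n + 1) + (c₀ : ℂ) * g n‖ ≤ (|c₂| + |c₁| + |c₀|) * M :=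
  calc _ ≤ ‖(c₂ : ℂ) * g (n + 2)‖ + ‖(c₁ : ℂ) * g (n + 1)‖ + ‖(c₀ : ℂ) * g n‖ :=
        norm_add₃_le
    _ ≤ |c₂| * M + |c₁| * M + |c₀| * M := by
        simp only [norm_mul, Complex.norm_real, Real.norm_eq_abs]
        gcongr <;> apply hg
    _ = (|c₂| + |c₁| + |c₀|) * M := by ring

theorem two_step_uniform_in_time_stable_general
    (a₀ a₁ b₀ b₁ b₂ : ℝ) (hb₂ : 0 < b₂)
    (z : ℂ) (hz : z.re ≤ 0) (h : ℝ)
    (hroots : ∀ w : ℂ,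
      (1 - (b₂ : ℂ) * z) * w ^ 2 + ((a₁ : ℂ) - (b₁ : ℂ) * z) * w
        + ((a₀ : ℂ) - (b₀ : ℂ) * z) = 0 → ‖w‖ < 1)
    (M : ℝ) (g : ℕ → ℂ) (hg : ∀ n, ‖g n‖ ≤ M) :
    ∃ C : ℝ, 0 ≤ C ∧
      ∀ y : ℕ → ℂ,
        (∀ n, (1 - (b₂ : ℂ) * z) * y (n + 2) + ((a₁ : ℂ) - (b₁ : ℂ) * z) * y (n + 1)
            + ((a₀ : ℂ) - (b₀ : ℂ) * z) * y n
          = (h : ℂ) * ((b₂ : ℂ) * g (n + 2) + (b₁ : ℂ) * g (n + 1) + (b₀ : ℂ) * g n)) →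
        (∃ K : ℝ, ∀ n, ‖y n‖ ≤ K) ∧
        limsup (fun n => ‖y n‖) atTop ≤ C := by
  have hA := Complex.one_sub_ofReal_mul_ne_zero hb₂ hz
  obtain ⟨r₁, r₂, hB, hC⟩ := exists_quadratic_vieta (b := (a₁ : ℂ) - b₁ * z)
    (c := (a₀ : ℂ) - b₀ * z) hA
  have hr₁ : ‖r₁‖ < 1 := hroots r₁ (by rw [hB, hC]; ring)
  have hr₂ : ‖r₂‖ < 1 := hroots r₂ (by rw [hB, hC]; ring)
  have hM : 0 ≤ M := (norm_nonneg _).trans (hg 0)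
  set F := ‖(h : ℂ)‖ * ((|b₂| + |b₁| + |b₀|) * M) / ‖1 - (b₂ : ℂ) * z‖
  refine ⟨F / (1 - ‖r₁‖) / (1 - ‖r₂‖), ?_, fun y hy => ?_⟩
  · have := sub_pos.2 hr₁
    have := sub_pos.2 hr₂
    positivity
  have hf (n : ℕ) : ‖(h : ℂ) * ((b₂ : ℂ) * g (n + 2) + (b₁ : ℂ) * g (n + 1) + (b₀ : ℂ) * g n)
      / (1 - (b₂ : ℂ) * z)‖ ≤ F := by
    rw [norm_div, norm_mul]
    exact div_le_div_of_nonneg_right (mul_le_mul_of_nonneg_left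
      (Complex.norm_ofReal_mul_add_le hg b₀ b₁ b₂ n) (norm_nonneg _)) (norm_nonneg _)
  obtain ⟨hu_bdd, hu_limsup⟩ := bddAbove_norm_and_limsup_norm_le_of_succ_eq_mul_add hr₁
    (x := fun n => y (n + 1) - r₂ * y n) (sub_mul_succ_eq_of_quadratic_recurrence hA hB hC hy)
    ⟨F, forall_mem_range.2 hf⟩
    (limsup_le_of_le (isCoboundedUnder_le_of_le atTop fun n => norm_nonneg _)
      (Eventually.of_forall hf))
  obtain ⟨⟨K, hK⟩, hy_limsup⟩ := bddAbove_norm_and_limsup_norm_le_of_succ_eq_mul_add hr₂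
    (x := y) (fun n => (add_sub_cancel _ _).symm) hu_bdd hu_limsup
  exact ⟨⟨K, forall_mem_range.1 hK⟩, hy_limsup⟩

/-- Sufficiency direction of the equivalence between A-stability and uniform-in-time
stability: if both roots of (1 − b₂z)w² + (a₁ − b₁z)w + (a₀ − b₀z) lie strictly inside
the unit disc, then every numerical solution of the two-step scheme applied to the
damped-forced equation with bounded forcing remains uniformly bounded in time, with
limsup bound independent of the initial values. -/
theorem two_step_uniform_in_time_stable
    (a₀ a₁ b₀ b₁ b₂ : ℝ) (hb₂ : 0 < b₂)
    (z : ℂ) (hz : z.re ≤ 0) (h : ℝ) (hh : 0 < h)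
    (hroots : ∀ w : ℂ,
      (1 - (b₂ : ℂ) * z) * w ^ 2 + ((a₁ : ℂ) - (b₁ : ℂ) * z) * w
        + ((a₀ : ℂ) - (b₀ : ℂ) * z) = 0 → ‖w‖ < 1)
    (M : ℝ) (hM : 0 ≤ M) (g : ℕ → ℂ) (hg : ∀ n, ‖g n‖ ≤ M) :
    ∃ C : ℝ, 0 ≤ C ∧
      ∀ y : ℕ → ℂ,
        (∀ n, (1 - (b₂ : ℂ) * z) * y (n + 2) + ((a₁ : ℂ) - (b₁ : ℂ) * z) * y (n + 1)
            + ((a₀ : ℂ) - (b₀ : ℂ) * z) * y n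
          = (h : ℂ) * ((b₂ : ℂ) * g (n + 2) + (b₁ : ℂ) * g (n + 1) + (b₀ : ℂ) * g n)) →
        (∃ K : ℝ, ∀ n, ‖y n‖ ≤ K) ∧
        limsup (fun n => ‖y n‖) atTop ≤ C :=
  two_step_uniform_in_time_stable_general a₀ a₁ b₀ b₁ b₂ hb₂ z hz h hroots M g hg
end

section
/- Let H be a real inner product space, α a real number, and y₋, y₀, y₊ ∈ H. Define Q_α(u, v) = (1/4)·((2α−1)·‖u‖² − 4α·⟨u, v⟩ + (2α+3)·‖v‖²). Then ⟨(3/2)·y₊ − 2·y₀ + (1/2)·y₋ , α·y₊ + (2−2α)·y₀ + (α−1)·y₋⟩ = Q_α(y₀, y₊) − Q_α(y₋, y₀) + ((4α−3)/4)·‖y₊ − 2·y₀ + y₋‖². -/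
open scoped RealInnerProductSpace

/-- G-stability energy identity for the generalized BDF2 scheme: with
Q_α(u, v) = (1/4)·((2α−1)‖u‖² − 4α⟨u,v⟩ + (2α+3)‖v‖²),
⟨(3/2)yp − 2y₀ + (1/2)ym, αyp + (2−2α)y₀ + (α−1)ym⟩
  = Q_α(y₀, yp) − Q_α(ym, y₀) + ((4α−3)/4)‖yp − 2y₀ + ym‖². -/
theorem generalized_BDF2_G_identity
    {H : Type*} [NormedAddCommGroup H] [InnerProductSpace ℝ H]
    (α : ℝ) (ym y₀ yp : H) :
    ⟪(3/2 : ℝ) • yp - (2 : ℝ) • y₀ + (1/2 : ℝ) • ym,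
        α • yp + (2 - 2 * α) • y₀ + (α - 1) • ym⟫
      = ((1/4) * ((2 * α - 1) * ‖y₀‖ ^ 2 - 4 * α * ⟪y₀, yp⟫ + (2 * α + 3) * ‖yp‖ ^ 2))
        - ((1/4) * ((2 * α - 1) * ‖ym‖ ^ 2 - 4 * α * ⟪ym, y₀⟫ + (2 * α + 3) * ‖y₀‖ ^ 2))
        + ((4 * α - 3) / 4) * ‖yp - (2 : ℝ) • y₀ + ym‖ ^ 2 := by
  have h := real_inner_comm ym yp
  have h2 := real_inner_comm ym y₀
  have h3 := real_inner_comm y₀ yp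
  simp only [← real_inner_self_eq_norm_sq, inner_add_left, inner_add_right,
    inner_sub_left, inner_sub_right, inner_smul_left, inner_smul_right,
    RCLike.conj_to_real]
  ring_nf
  linear_combination (α/2 - 3/4) * h + (1/2) * h2 + (3/2 - α) * h3
end

section
/- Let H be a real Hilbert space and L, L_s : H → H continuous linear maps such that: (i) there exists l₀ > 0 with ⟨L x, x⟩ ≥ l₀·‖x‖² for all x ∈ H; (ii) L_s is skew-symmetric, i.e. ⟨L_s x, y⟩ = −⟨x, L_s y⟩ for all x, y; (iii) there exists C₁ > 0 with ⟨L x, x⟩ ≥ C₁·‖L_s x‖² for all x. Let α > 3/4, let M ≥ 0, let g : ℕ → H satisfy ‖g_n‖ ≤ M for all n, and let h > 0 satisfy the time-step restriction h·(l₀·(α−1)²/2 + (α−1)²/2 + α²/(2·C₁)) ≤ (4α−3)/4. Then there exists a constant B ≥ 0, depending only on α, l₀, C₁, h and M but not on the initial data, such that every sequence y : ℕ → H satisfying for all n the generalized BDF2-IMEX recurrence (3/2)·y_{n+2} − 2·y_{n+1} + (1/2)·y_n + h·L(α·y_{n+2} + (2−2α)·y_{n+1} + (α−1)·y_n) + h·L_s(2·y_{n+1}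 − y_n) = h·g_{n+2} is bounded (sup_n ‖y_n‖ < ∞) and satisfies limsup_{n→∞} ‖y_n‖ ≤ B. (Uniform-in-time energy bound for the generalized BDF2-IMEX method.) -/
set_option maxHeartbeats 2000000

open Filter
open scoped RealInnerProductSpace
open scoped RealInnerProductSpace

lemma bdf2_inner_identity {H : Type*} [NormedAddCommGroup H] [InnerProductSpace ℝ H]
    (α : ℝ) (a b c : H) :
    ⟪(3/2:ℝ)•a - (2:ℝ)•b + (1/2:ℝ)•c, α•a + (2-2*α)•b + (α-1)•c⟫
      = ((‖a‖^2 + ‖(2:ℝ)•a - b‖^2)/4 + (α-1)/2*‖a-b‖^2)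
        - ((‖b‖^2 + ‖(2:ℝ)•b - c‖^2)/4 + (α-1)/2*‖b-c‖^2)
        + (4*α-3)/4*‖a - (2:ℝ)•b + c‖^2 := by
  have h1 : ∀ x : H, ‖x‖^2 = ⟪x,x⟫ := fun x => (real_inner_self_eq_norm_sq x).symm
  rw [h1 a, h1 ((2:ℝ)•a - b), h1 (a-b), h1 b, h1 ((2:ℝ)•b - c), h1 (b-c), h1 (a - (2:ℝ)•b + c)]
  simp only [inner_add_left, inner_add_right, inner_sub_left, inner_sub_right,
    real_inner_smul_left, real_inner_smul_right]
  rw [real_inner_comm b a, real_inner_comm c a, real_inner_comm c b]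
  ring

lemma bdf2_scalar (h l₀ C₁ α M x1 x2 x3 IL Is Ig na sa da nb sb db nd nv ns : ℝ)
    (hl₀ : 0 < l₀) (hC₁ : 0 < C₁) (hα : α > 3/4) (hM : 0 ≤ M) (hh : 0 < h)
    (hstep : h * (l₀ * (α - 1) ^ 2 / 2 + (α - 1) ^ 2 / 2 + α ^ 2 / (2 * C₁))
        ≤ (4 * α - 3) / 4)
    (hna0 : 0 ≤ na) (hnd0 : 0 ≤ nd) (hnv0 : 0 ≤ nv) (hns0 : 0 ≤ ns)
    (E0 : 3/2*x1 - 2*x2 + 1/2*x3 + h*IL + h*(α*Is) = h*Ig)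
    (hid : 3/2*x1 - 2*x2 + 1/2*x3
      = (na^2 + sa)/4 + (α-1)/2*da - ((nb^2 + sb)/4 + (α-1)/2*db) + (4*α-3)/4*nd^2)
    (hIL1 : IL ≥ l₀*nv^2) (hIL2 : IL ≥ C₁*ns^2)
    (hIs : -(nd*ns) ≤ Is)
    (hIg : Ig ≤ M*nv)
    (hna : na ≤ nv + |α-1| * nd) (hnv : nv ≤ na + |α-1| * nd) :
    (na^2 + sa)/4 + (α-1)/2*da + h*l₀/8*na^2
      ≤ (nb^2 + sb)/4 + (α-1)/2*db + h*(2*M^2/l₀ + M^2) := by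
  have hα0 : (0:ℝ) < α := by linarith
  have hcoef : 0 ≤ (4*α-3)/4 - h*(l₀*(α-1)^2/2) - h*(α^2/(2*C₁)) - h*((α-1)^2/4) := by
    linarith [hstep, mul_nonneg hh.le (sq_nonneg (α-1))]
  have S6 : 0 ≤ ((4*α-3)/4 - h*(l₀*(α-1)^2/2) - h*(α^2/(2*C₁)) - h*((α-1)^2/4))*nd^2 :=
    mul_nonneg hcoef (sq_nonneg _)
  have S2 : h*IL ≥ h*(l₀/2*nv^2) + h*(C₁/2*ns^2) := by
    have hb : l₀/2*nv^2 + C₁/2*ns^2 ≤ IL := by linarith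
    linarith [mul_le_mul_of_nonneg_left hb hh.le]
  have S3 : h*(α*Is) ≥ -(h*(α^2/(2*C₁))*nd^2) - h*(C₁/2)*ns^2 := by
    have e : α^2/(2*C₁)*nd^2 + C₁/2*ns^2 - α*(nd*ns) = (α*nd - C₁*ns)^2/(2*C₁) := by
      field_simp; ring
    have e2 := div_nonneg (sq_nonneg (α*nd - C₁*ns)) (by positivity : (0:ℝ) ≤ 2*C₁)
    have h1 : -(α^2/(2*C₁)*nd^2 + C₁/2*ns^2) ≤ α*Is := by
      linarith [mul_le_mul_of_nonneg_left hIs hα0.le, e, e2]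
    linarith [mul_le_mul_of_nonneg_left h1 hh.le]
  have S4 : h*(l₀/2*nv^2) ≥ h*(l₀/4)*na^2 - h*(l₀*(α-1)^2/2)*nd^2 := by
    have h1 : na^2 ≤ (nv + |α-1| * nd)^2 := by
      have := pow_le_pow_left₀ hna0 hna 2
      linarith
    have e3 : (|α-1| * nd)^2 = (α-1)^2*nd^2 := by rw [mul_pow, sq_abs]
    have sq1 : na^2 ≤ 2*nv^2 + 2*((α-1)^2*nd^2) := by
      linarith [h1, sq_nonneg (nv - |α-1| * nd), e3]
    linarith [mul_le_mul_of_nonneg_left sq1 (by positivity : (0:ℝ) ≤ h*(l₀/4))]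
  have S5 : h*Ig ≤ h*(l₀/8)*na^2 + h*(2*M^2/l₀) + h*((α-1)^2/4)*nd^2 + h*M^2 := by
    have h2 : M*nv ≤ M*na + M*(|α-1| * nd) := by
      linarith [mul_le_mul_of_nonneg_left hnv hM]
    have hy1 : M*na ≤ l₀/8*na^2 + 2*M^2/l₀ := by
      have e : l₀/8*na^2 + 2*M^2/l₀ - M*na = (l₀*na - 4*M)^2/(8*l₀) := by
        field_simp; ring
      have e2 := div_nonneg (sq_nonneg (l₀*na - 4*M)) (by positivity : (0:ℝ) ≤ 8*l₀)
      linarith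
    have hy2 : M*(|α-1| * nd) ≤ (α-1)^2/4*nd^2 + M^2 := by
      have e3 : (|α-1| * nd)^2 = (α-1)^2*nd^2 := by rw [mul_pow, sq_abs]
      linarith [sq_nonneg (|α-1| * nd - 2*M), e3]
    have hb : Ig ≤ l₀/8*na^2 + 2*M^2/l₀ + (α-1)^2/4*nd^2 + M^2 := by linarith
    linarith [mul_le_mul_of_nonneg_left hb hh.le]
  linarith

lemma bdf2_per_step {H : Type*} [NormedAddCommGroup H] [InnerProductSpace ℝ H]
    (L Ls : H →L[ℝ] H)
    (l₀ : ℝ) (hl₀ : 0 < l₀) (hL : ∀ x : H, ⟪L x, x⟫ ≥ l₀ * ‖x‖ ^ 2)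
    (hLs : ∀ x y : H, ⟪Ls x, y⟫ = -⟪x, Ls y⟫)
    (C₁ : ℝ) (hC₁ : 0 < C₁) (hdom : ∀ x : H, ⟪L x, x⟫ ≥ C₁ * ‖Ls x‖ ^ 2)
    (α : ℝ) (hα : α > 3/4)
    (M : ℝ) (hM : 0 ≤ M)
    (h : ℝ) (hh : 0 < h)
    (hstep : h * (l₀ * (α - 1) ^ 2 / 2 + (α - 1) ^ 2 / 2 + α ^ 2 / (2 * C₁))
        ≤ (4 * α - 3) / 4)
    (a b c gn : H) (hgn : ‖gn‖ ≤ M)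
    (heq : (3/2 : ℝ) • a - (2 : ℝ) • b + (1/2 : ℝ) • c
            + h • L (α • a + (2 - 2 * α) • b + (α - 1) • c)
            + h • Ls ((2 : ℝ) • b - c) = h • gn) :
    ((‖a‖^2 + ‖(2:ℝ)•a - b‖^2)/4 + (α-1)/2*‖a-b‖^2) + h*l₀/8*‖a‖^2
      ≤ ((‖b‖^2 + ‖(2:ℝ)•b - c‖^2)/4 + (α-1)/2*‖b-c‖^2) + h*(2*M^2/l₀ + M^2) := by
  obtain ⟨v, hv⟩ : ∃ v, v = α•a + (2-2*α)•b + (α-1)•c := ⟨_, rfl⟩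
  obtain ⟨d, hd⟩ : ∃ d, d = a - (2:ℝ)•b + c := ⟨_, rfl⟩
  have hvd : (2:ℝ)•b - c = v - α•d := by rw [hv, hd]; module
  have hva : v = a + (α-1)•d := by rw [hv, hd]; module
  have hda : a = v - (α-1)•d := by rw [hv, hd]; module
  have hskew : ⟪Ls ((2:ℝ)•b - c), v⟫ = α*⟪d, Ls v⟫ := by
    rw [hvd, map_sub, map_smul, inner_sub_left]
    have h0 : ⟪Ls v, v⟫ = 0 := by
      have h1 := hLs v v
      have h2 : ⟪v, Ls v⟫ = ⟪Ls v, v⟫ := real_inner_comm _ _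
      linarith
    rw [h0, real_inner_smul_left, hLs d v]; ring
  rw [← hv] at heq
  have E0 := congrArg (fun x : H => ⟪x, v⟫) heq
  simp only [inner_add_left, inner_sub_left, real_inner_smul_left] at E0
  rw [hskew] at E0
  have hid : ⟪(3/2:ℝ)•a - (2:ℝ)•b + (1/2:ℝ)•c, v⟫
      = ((‖a‖^2 + ‖(2:ℝ)•a - b‖^2)/4 + (α-1)/2*‖a-b‖^2)
        - ((‖b‖^2 + ‖(2:ℝ)•b - c‖^2)/4 + (α-1)/2*‖b-c‖^2)
        + (4*α-3)/4*‖d‖^2 := by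
    rw [hv, hd]; exact bdf2_inner_identity α a b c
  simp only [inner_add_left, inner_sub_left, real_inner_smul_left] at hid
  have hna : ‖a‖ ≤ ‖v‖ + |α-1| * ‖d‖ := by
    calc ‖a‖ = ‖v - (α-1)•d‖ := by rw [← hda]
    _ ≤ ‖v‖ + ‖(α-1)•d‖ := norm_sub_le _ _
    _ = ‖v‖ + |α-1| * ‖d‖ := by rw [norm_smul, Real.norm_eq_abs]
  have hnv : ‖v‖ ≤ ‖a‖ + |α-1| * ‖d‖ := by
    calc ‖v‖ = ‖a + (α-1)•d‖ := by rw [← hva]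
    _ ≤ ‖a‖ + ‖(α-1)•d‖ := norm_add_le _ _
    _ = ‖a‖ + |α-1| * ‖d‖ := by rw [norm_smul, Real.norm_eq_abs]
  have hIs : -(‖d‖*‖Ls v‖) ≤ ⟪d, Ls v⟫ := by
    have h1 := abs_real_inner_le_norm d (Ls v)
    have h2 := neg_abs_le ⟪d, Ls v⟫
    linarith
  have hIg : ⟪gn, v⟫ ≤ M*‖v‖ := by
    have h0 := real_inner_le_norm gn v
    have h1 := mul_le_mul_of_nonneg_right hgn (norm_nonneg v)
    linarith
  exact bdf2_scalar h l₀ C₁ α M _ _ _ _ _ _ ‖a‖ _ _ ‖b‖ _ _ ‖d‖ ‖v‖ ‖Ls v‖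
    hl₀ hC₁ hα hM hh hstep (norm_nonneg a) (norm_nonneg d) (norm_nonneg v)
    (norm_nonneg (Ls v)) E0 hid (hL v) (hdom v) hIs hIg hna hnv


lemma bdf2_flow_scalar (α μ nb X Y : ℝ) (hα : α > 3/4) (hμ : μ = min (1/4) (α-3/4))
    (hX0 : 0 ≤ X) (hY0 : 0 ≤ Y) (hY : Y ≤ X + nb) :
    μ*nb^2 ≤ (nb^2 + X^2)/4 + (α-1)/2*Y^2 := by
  subst hμ
  rcases le_or_gt 1 α with h1 | h1
  · have hm := min_le_left (1/4:ℝ) (α-3/4)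
    linarith [mul_le_mul_of_nonneg_right hm (sq_nonneg nb), sq_nonneg X,
      mul_nonneg (show (0:ℝ) ≤ (α-1)/2 by linarith) (sq_nonneg Y)]
  · have hm := min_le_right (1/4:ℝ) (α-3/4)
    have hY2 : Y^2 ≤ (X+nb)^2 := by nlinarith
    have h2 : Y^2 ≤ 2*X^2 + 2*nb^2 := by nlinarith [sq_nonneg (X-nb)]
    have hp := mul_nonneg (show (0:ℝ) ≤ 1-α by linarith)
      (show (0:ℝ) ≤ 2*X^2 + 2*nb^2 - Y^2 by linarith)
    linarith [hp, mul_nonneg (show (0:ℝ) ≤ α-3/4 by linarith) (sq_nonneg X),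
      mul_le_mul_of_nonneg_right hm (sq_nonneg nb)]

lemma bdf2_fup_scalar (α P na nb X Y : ℝ) (hP : P = 9/4 + |α-1|)
    (hna : 0 ≤ na) (hnb : 0 ≤ nb) (hX0 : 0 ≤ X) (hX : X ≤ 2*na + nb)
    (hY0 : 0 ≤ Y) (hY : Y ≤ na + nb) :
    (na^2 + X^2)/4 + (α-1)/2*Y^2 ≤ P*(na^2 + nb^2) := by
  subst hP
  have h1 : X^2 ≤ (2*na+nb)^2 := by nlinarith
  have h2 : Y^2 ≤ (na+nb)^2 := by nlinarith
  have h3 : (α-1)/2*Y^2 ≤ |α-1|/2*(na+nb)^2 := by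
    have ha : (α-1)/2*Y^2 ≤ |α-1|/2*Y^2 :=
      mul_le_mul_of_nonneg_right (by linarith [le_abs_self (α-1)]) (sq_nonneg Y)
    have hb : |α-1|/2*Y^2 ≤ |α-1|/2*(na+nb)^2 :=
      mul_le_mul_of_nonneg_left h2 (by positivity)
    linarith
  linarith [h1, h3, sq_nonneg (na-nb), sq_nonneg na, sq_nonneg nb,
    mul_nonneg (abs_nonneg (α-1)) (sq_nonneg (na-nb))]


/-- Uniform-in-time energy bound for the generalized BDF2-IMEX method: under coercivity
of L, skew-symmetry of L_s, dominance of L_s by L, α > 3/4, bounded forcing, and the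
mild time-step restriction, every numerical solution is bounded uniformly in time with
limsup bound independent of the initial data. -/
theorem generalized_BDF2_IMEX_uniform_in_time
    {H : Type*} [NormedAddCommGroup H] [InnerProductSpace ℝ H] [CompleteSpace H]
    (L Ls : H →L[ℝ] H)
    (l₀ : ℝ) (hl₀ : 0 < l₀) (hL : ∀ x : H, ⟪L x, x⟫ ≥ l₀ * ‖x‖ ^ 2)
    (hLs : ∀ x y : H, ⟪Ls x, y⟫ = -⟪x, Ls y⟫)
    (C₁ : ℝ) (hC₁ : 0 < C₁) (hdom : ∀ x : H, ⟪L x, x⟫ ≥ C₁ * ‖Ls x‖ ^ 2)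
    (α : ℝ) (hα : α > 3/4)
    (M : ℝ) (hM : 0 ≤ M) (g : ℕ → H) (hg : ∀ n, ‖g n‖ ≤ M)
    (h : ℝ) (hh : 0 < h)
    (hstep : h * (l₀ * (α - 1) ^ 2 / 2 + (α - 1) ^ 2 / 2 + α ^ 2 / (2 * C₁))
        ≤ (4 * α - 3) / 4) :
    ∃ B : ℝ, 0 ≤ B ∧
      ∀ y : ℕ → H,
        (∀ n, (3/2 : ℝ) • y (n + 2) - (2 : ℝ) • y (n + 1) + (1/2 : ℝ) • y n
            + h • L (α • y (n + 2) + (2 - 2 * α) • y (n + 1) + (α - 1) • y n)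
            + h • Ls ((2 : ℝ) • y (n + 1) - y n)
          = h • g (n + 2)) →
        (∃ K : ℝ, ∀ n, ‖y n‖ ≤ K) ∧
        limsup (fun n => ‖y n‖) atTop ≤ B := by
  obtain ⟨μ, hμdef⟩ : ∃ μ : ℝ, μ = min (1/4) (α-3/4) := ⟨_, rfl⟩
  obtain ⟨P, hPdef⟩ : ∃ P : ℝ, P = 9/4 + |α-1| := ⟨_, rfl⟩
  obtain ⟨κ, hκdef⟩ : ∃ κ : ℝ, κ = h*l₀/8 := ⟨_, rfl⟩
  obtain ⟨C, hCdef⟩ : ∃ C : ℝ, C = h*(2*M^2/l₀ + M^2) := ⟨_, rfl⟩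
  obtain ⟨Q, hQdef⟩ : ∃ Q : ℝ, Q = 2*P*C/κ := ⟨_, rfl⟩
  obtain ⟨ρ, hρdef⟩ : ∃ ρ : ℝ, ρ = P/(P+κ) := ⟨_, rfl⟩
  have hμ0 : 0 < μ := by rw [hμdef]; exact lt_min (by norm_num) (by linarith)
  have hP0 : 0 < P := by rw [hPdef]; positivity
  have hκ0 : 0 < κ := by rw [hκdef]; positivity
  have hC0 : 0 ≤ C := by rw [hCdef]; positivity
  have hQ0 : 0 ≤ Q := by rw [hQdef]; positivity
  have hρ0 : 0 ≤ ρ := by rw [hρdef]; positivity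
  have hρ1 : ρ < 1 := by rw [hρdef, div_lt_one (by linarith)]; linarith
  have eQ : κ*Q = 2*P*C := by
    rw [hQdef]; exact mul_div_cancel₀ _ (ne_of_gt hκ0)
  refine ⟨Real.sqrt (Q/μ + 1), Real.sqrt_nonneg _, fun y hy => ?_⟩
  obtain ⟨F, hF⟩ : ∃ F : ℕ → ℝ, F = fun n =>
      (‖y (n+1)‖^2 + ‖(2:ℝ)•y (n+1) - y n‖^2)/4 + (α-1)/2*‖y (n+1) - y n‖^2 := ⟨_, rfl⟩
  -- one-step energy estimate
  have h1 : ∀ n, F (n+1) + κ*‖y (n+2)‖^2 ≤ F n + C := by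
    intro n
    have hps := bdf2_per_step L Ls l₀ hl₀ hL hLs C₁ hC₁ hdom α hα M hM h hh hstep
      (y (n+2)) (y (n+1)) (y n) (g (n+2)) (hg (n+2)) (hy n)
    rw [hF, hκdef, hCdef]
    exact hps
  -- lower bound
  have hlow : ∀ n, μ*‖y (n+1)‖^2 ≤ F n := by
    intro n
    rw [hF]
    have e : y (n+1) - y n = ((2:ℝ)•y (n+1) - y n) - y (n+1) := by module
    exact bdf2_flow_scalar α μ ‖y (n+1)‖ ‖(2:ℝ)•y (n+1) - y n‖ ‖y (n+1) - y n‖ hα hμdef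
      (norm_nonneg _) (norm_nonneg _) (by rw [e]; exact norm_sub_le _ _)
  -- upper bound
  have hup : ∀ n, F (n+1) ≤ P*(‖y (n+2)‖^2 + ‖y (n+1)‖^2) := by
    intro n
    rw [hF]
    have hX : ‖(2:ℝ)•y (n+2) - y (n+1)‖ ≤ 2*‖y (n+2)‖ + ‖y (n+1)‖ := by
      calc ‖(2:ℝ)•y (n+2) - y (n+1)‖ ≤ ‖(2:ℝ)•y (n+2)‖ + ‖y (n+1)‖ := norm_sub_le _ _
      _ = 2*‖y (n+2)‖ + ‖y (n+1)‖ := by rw [norm_smul]; norm_num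
    exact bdf2_fup_scalar α P ‖y (n+2)‖ ‖y (n+1)‖ ‖(2:ℝ)•y (n+2) - y (n+1)‖
      ‖y (n+2) - y (n+1)‖ hPdef (norm_nonneg _) (norm_nonneg _) (norm_nonneg _) hX
      (norm_nonneg _) (norm_sub_le _ _)
  -- two-step contraction
  have hF2 : ∀ n, (P+κ)*F (n+2) ≤ P*F n + 2*P*C := by
    intro n
    have u1 := h1 n
    have u2 : F (n+2) + κ*‖y (n+3)‖^2 ≤ F (n+1) + C := h1 (n+1)
    have u3 : F (n+2) ≤ P*(‖y (n+3)‖^2 + ‖y (n+2)‖^2) := hup (n+1)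
    have u4 := mul_le_mul_of_nonneg_left u3 hκ0.le
    have u5 : κ*‖y (n+2)‖^2 + κ*‖y (n+3)‖^2 ≤ F n - F (n+2) + 2*C := by linarith
    have u6 := mul_le_mul_of_nonneg_left u5 hP0.le
    nlinarith [u4, u6]
  -- uniform bound on F
  have hbdd : ∀ n, F n ≤ max (max (F 0) (F 1)) Q ∧ F (n+1) ≤ max (max (F 0) (F 1)) Q := by
    intro n
    induction n with
    | zero => exact ⟨le_trans (le_max_left (F 0) (F 1)) (le_max_left _ _),
        le_trans (le_max_right (F 0) (F 1)) (le_max_left _ _)⟩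
    | succ n ih =>
      refine ⟨ih.2, ?_⟩
      have u := hF2 n
      have u2 := mul_le_mul_of_nonneg_left ih.1 hP0.le
      have u3 := mul_le_mul_of_nonneg_left (le_max_right (max (F 0) (F 1)) Q) hκ0.le
      have u4 : (P+κ)*F (n+2) ≤ (P+κ)*(max (max (F 0) (F 1)) Q) := by nlinarith [eQ]
      exact le_of_mul_le_mul_left u4 (by linarith)
  obtain ⟨K₀, hK₀def⟩ : ∃ K₀ : ℝ, K₀ = max (max (F 0) (F 1)) Q := ⟨_, rfl⟩
  have hKQ : Q ≤ K₀ := hK₀def ▸ le_max_right _ _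
  have hK0 : 0 ≤ K₀ := le_trans hQ0 hKQ
  have hbdd' : ∀ n, F n ≤ K₀ := fun n => hK₀def ▸ (hbdd n).1
  -- geometric decay
  have hdecay : ∀ k n, F (n + 2*k) ≤ ρ^k*K₀ + Q := by
    intro k
    induction k with
    | zero =>
      intro n
      simpa using le_trans (hbdd' n) (by linarith)
    | succ k ih =>
      intro n
      have e : n + 2*(k+1) = (n + 2*k) + 2 := by ring
      rw [e]
      have u := hF2 (n + 2*k)
      have u2 := mul_le_mul_of_nonneg_left (ih n) hP0.le
      have e2 : (P+κ)*(ρ^(k+1)*K₀) = P*(ρ^k*K₀) := by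
        rw [hρdef, pow_succ]; field_simp
      have u3 : (P+κ)*F ((n+2*k)+2) ≤ (P+κ)*(ρ^(k+1)*K₀ + Q) := by nlinarith [eQ, e2]
      exact le_of_mul_le_mul_left u3 (by linarith)
  constructor
  · -- boundedness
    refine ⟨max ‖y 0‖ (Real.sqrt (K₀/μ)), fun n => ?_⟩
    cases n with
    | zero => exact le_max_left _ _
    | succ n =>
      refine le_trans ?_ (le_max_right _ _)
      apply Real.le_sqrt_of_sq_le
      rw [le_div_iff₀ hμ0]
      calc ‖y (n+1)‖^2 * μ = μ*‖y (n+1)‖^2 := by ring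
      _ ≤ F n := hlow n
      _ ≤ K₀ := hbdd' n
  · -- limsup bound
    obtain ⟨k, hk⟩ : ∃ k, ρ^k*K₀ ≤ μ := by
      have ht : Tendsto (fun k : ℕ => ρ^k*K₀) atTop (nhds 0) := by
        simpa using (tendsto_pow_atTop_nhds_zero_of_lt_one hρ0 hρ1).mul_const K₀
      exact (ht.eventually_le_const hμ0).exists
    have hev : ∀ᶠ m in atTop, ‖y m‖ ≤ Real.sqrt (Q/μ + 1) := by
      rw [eventually_atTop]
      refine ⟨2*k+1, fun m hm => ?_⟩
      obtain ⟨j, rfl⟩ := le_iff_exists_add.mp hm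
      have e : 2*k+1+j = (j + 2*k) + 1 := by omega
      rw [e]
      apply Real.le_sqrt_of_sq_le
      have hd := hdecay k j
      have hl := hlow (j + 2*k)
      have h9 : ‖y ((j+2*k)+1)‖^2 * μ ≤ Q + μ := by nlinarith
      have h10 : ‖y ((j+2*k)+1)‖^2 ≤ (Q + μ)/μ := (le_div_iff₀ hμ0).mpr h9
      have e3 : (Q + μ)/μ = Q/μ + 1 := by field_simp
      linarith
    exact limsup_le_of_le (isCoboundedUnder_le_of_le atTop (fun n => norm_nonneg (y n))) hev
end

section
/- Let H be a real inner product space and L : H → H a linear map that is symmetric (⟨L x, y⟩ = ⟨x, L y⟩ for all x, y) and positive semidefinite (⟨L x, x⟩ ≥ 0 for all x). Let α be real and set α₁ = |3/2 − 2α| and α₂ = |α − 1/2|. Then for any a, b, c ∈ H: 2·⟨L(α·c + (3/2−2α)·b + (α−1/2)·a), c⟩ ≥ (2α − α₁ − α₂)·⟨L c, c⟩ − α₁·⟨L b, b⟩ − α₂·⟨L a, a⟩. -/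
open scoped RealInnerProductSpace

private lemma key_bound
    {H : Type*} [NormedAddCommGroup H] [InnerProductSpace ℝ H]
    (L : H →ₗ[ℝ] H)
    (hsym : ∀ x y : H, ⟪L x, y⟫ = ⟪x, L y⟫)
    (hpos : ∀ x : H, 0 ≤ ⟪L x, x⟫)
    (β : ℝ) (b c : H) :
    2 * β * ⟪L b, c⟫ ≥ -|β| * (⟪L b, b⟫ + ⟪L c, c⟫) := by
  have hplus : 0 ≤ ⟪L b, b⟫ + 2 * ⟪L b, c⟫ + ⟪L c, c⟫ := by
    have h0 := hpos (b + c)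
    have hcb : ⟪L c, b⟫ = ⟪L b, c⟫ := by rw [hsym c b, real_inner_comm]
    simp only [map_add, inner_add_left, inner_add_right] at h0
    linarith
  have hminus : 0 ≤ ⟪L b, b⟫ - 2 * ⟪L b, c⟫ + ⟪L c, c⟫ := by
    have h0 := hpos (b - c)
    have hcb : ⟪L c, b⟫ = ⟪L b, c⟫ := by rw [hsym c b, real_inner_comm]
    simp only [map_sub, inner_sub_left, inner_sub_right] at h0
    linarith
  rcases abs_cases β with ⟨h1, h2⟩ | ⟨h1, h2⟩ <;> nlinarith [hplus, hminus]

/-- Lower bound for the dissipative term in the generalized AM-AB2 stability proof: if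
L is symmetric positive semidefinite, then with α₁ = |3/2 − 2α| and α₂ = |α − 1/2|,
2⟨L(α·c + (3/2−2α)·b + (α−1/2)·a), c⟩ ≥ (2α − α₁ − α₂)⟨Lc, c⟩ − α₁⟨Lb, b⟩ − α₂⟨La, a⟩. -/
theorem generalized_AM2_dissipative_lower_bound
    {H : Type*} [NormedAddCommGroup H] [InnerProductSpace ℝ H]
    (L : H →ₗ[ℝ] H)
    (hsym : ∀ x y : H, ⟪L x, y⟫ = ⟪x, L y⟫)
    (hpos : ∀ x : H, 0 ≤ ⟪L x, x⟫)
    (α : ℝ) (α₁ α₂ : ℝ) (hα₁ : α₁ = |3/2 - 2 * α|) (hα₂ : α₂ = |α - 1/2|)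
    (a b c : H) :
    2 * ⟪L (α • c + (3/2 - 2 * α) • b + (α - 1/2) • a), c⟫
      ≥ (2 * α - α₁ - α₂) * ⟪L c, c⟫ - α₁ * ⟪L b, b⟫ - α₂ * ⟪L a, a⟫ := by
  have expand : ⟪L (α • c + (3/2 - 2 * α) • b + (α - 1/2) • a), c⟫
      = α * ⟪L c, c⟫ + (3/2 - 2 * α) * ⟪L b, c⟫ + (α - 1/2) * ⟪L a, c⟫ := by
    simp [map_add, map_smul, inner_add_left, real_inner_smul_left]
  have h1 := key_bound L hsym hpos (3/2 - 2 * α) b c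
  have h2 := key_bound L hsym hpos (α - 1/2) a c
  rw [expand]
  rw [← hα₁] at h1
  rw [← hα₂] at h2
  linarith [h1, h2]
end
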